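/- Let W_{XY} be a quantum channel from S(H) to S(H_X ⊗ H_Y) and suppose W_X = Tr_Y ∘ W_{XY} is reversible with respect to all density operators on H via a channel R_X, and W_Y = Tr_X ∘ W_{XY} is constant equal to ρ_0 on pure states. Then for every density operator ρ on H (pure or mixed), (I_Y ⊗ R_X)(W_{XY}(ρ)) = ρ_0 ⊗ ρ, and consequently for any channel E_Y acting on system Y, (I_Y ⊗ R_X)((E_Y ⊗ I_X)(W_{XY}(ρ))) = E_Y(ρ_0) ⊗ ρ. -/

import Mathlib

open Matrix
open scoped ComplexOrder

noncomputable section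

/-- A density operator: positive semidefinite with unit trace. -/
def IsDensity {n : Type*} [Fintype n] (ρ : Matrix n n ℂ) : Prop :=
  ρ.PosSemidef ∧ ρ.trace = 1

/-- A pure state: a density operator that is a (rank-one) projection. -/
def IsPure {n : Type*} [Fintype n] (ρ : Matrix n n ℂ) : Prop :=
  IsDensity ρ ∧ ρ * ρ = ρ

/-- A quantum channel (CPTP map), characterized by a Kraus representation. -/
def IsCPTP {n m : Type*} [Fintype n] [DecidableEq n] [Fintype m]
    (E : Matrix n n ℂ →ₗ[ℂ] Matrix m m ℂ) : Prop :=
  ∃ (N : ℕ) (K : Fin N → Matrix m n ℂ),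
    (∀ ρ, E ρ = ∑ a, K a * ρ * (K a)ᴴ) ∧ ∑ a, (K a)ᴴ * K a = 1

/-- The von Neumann entropy `H(ρ) = -Tr[ρ log ρ]`, via the eigenvalues. -/
def vnEntropy {n : Type*} [Fintype n] [DecidableEq n] (ρ : Matrix n n ℂ) : ℝ :=
  if h : ρ.IsHermitian then ∑ i, Real.negMulLog (h.eigenvalues i) else 0

/-- The matrix (spectral) logarithm of a Hermitian matrix. -/
def matLog {n : Type*} [Fintype n] [DecidableEq n] (ρ : Matrix n n ℂ) : Matrix n n ℂ :=
  if h : ρ.IsHermitian then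
    (h.eigenvectorUnitary : Matrix n n ℂ) *
      diagonal (fun i => (Real.log (h.eigenvalues i) : ℂ)) *
      star (h.eigenvectorUnitary : Matrix n n ℂ)
  else 0

/-- The quantum relative entropy `D(ρ‖σ) = Tr[ρ (log ρ - log σ)]`. -/
def relEntropy {n : Type*} [Fintype n] [DecidableEq n] (ρ σ : Matrix n n ℂ) : ℝ :=
  ((ρ * (matLog ρ - matLog σ)).trace).re

open Kronecker

/-- Partial trace over the second factor. -/
def ptraceSnd {α β : Type*} [Fintype β] (M : Matrix (α × β) (α × β) ℂ) :
    Matrix α α ℂ :=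
  fun i i' => ∑ j, M (i, j) (i', j)

/-- Partial trace over the first factor. -/
def ptraceFst {α β : Type*} [Fintype α] (M : Matrix (α × β) (α × β) ℂ) :
    Matrix β β ℂ :=
  fun j j' => ∑ i, M (i, j) (i, j')

/-- Extension `E ⊗ I` of a linear map `E` acting on the first tensor factor. -/
def lmapFst {β β' α : Type*} (E : Matrix β β ℂ →ₗ[ℂ] Matrix β' β' ℂ) :
    Matrix (β × α) (β × α) ℂ →ₗ[ℂ] Matrix (β' × α) (β' × α) ℂ where
  toFun M := fun p q => E (Matrix.of fun b b' => M (b, p.2) (b', q.2)) p.1 q.1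
  map_add' M N := by
    funext p q
    show E (Matrix.of fun b b' => (M + N) (b, p.2) (b', q.2)) p.1 q.1 =
      E (Matrix.of fun b b' => M (b, p.2) (b', q.2)) p.1 q.1 +
        E (Matrix.of fun b b' => N (b, p.2) (b', q.2)) p.1 q.1
    have h : (Matrix.of fun b b' => (M + N) (b, p.2) (b', q.2)) =
        (Matrix.of fun b b' => M (b, p.2) (b', q.2)) +
          (Matrix.of fun b b' => N (b, p.2) (b', q.2)) := rfl
    rw [h, map_add]; rfl
  map_smul' c M := by
    funext p q
    show E (Matrix.of fun b b' => (c • M) (b, p.2) (b', q.2)) p.1 q.1 =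
      c * E (Matrix.of fun b b' => M (b, p.2) (b', q.2)) p.1 q.1
    have h : (Matrix.of fun b b' => (c • M) (b, p.2) (b', q.2)) =
        c • (Matrix.of fun b b' => M (b, p.2) (b', q.2)) := rfl
    rw [h, _root_.map_smul]; rfl

/-- Extension `I ⊗ R` of a linear map `R` acting on the second tensor factor. -/
def lmapSnd {β α ι : Type*} (R : Matrix α α ℂ →ₗ[ℂ] Matrix ι ι ℂ) :
    Matrix (β × α) (β × α) ℂ →ₗ[ℂ] Matrix (β × ι) (β × ι) ℂ where
  toFun M := fun p q => R (Matrix.of fun a a' => M (p.1, a) (q.1, a')) p.2 q.2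
  map_add' M N := by
    funext p q
    show R (Matrix.of fun a a' => (M + N) (p.1, a) (q.1, a')) p.2 q.2 =
      R (Matrix.of fun a a' => M (p.1, a) (q.1, a')) p.2 q.2 +
        R (Matrix.of fun a a' => N (p.1, a) (q.1, a')) p.2 q.2
    have h : (Matrix.of fun a a' => (M + N) (p.1, a) (q.1, a')) =
        (Matrix.of fun a a' => M (p.1, a) (q.1, a')) +
          (Matrix.of fun a a' => N (p.1, a) (q.1, a')) := rfl
    rw [h, map_add]; rfl
  map_smul' c M := by
    funext p q
    show R (Matrix.of fun a a' => (c • M) (p.1, a) (q.1, a')) p.2 q.2 =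
      c * R (Matrix.of fun a a' => M (p.1, a) (q.1, a')) p.2 q.2
    have h : (Matrix.of fun a a' => (c • M) (p.1, a) (q.1, a')) =
        c • (Matrix.of fun a a' => M (p.1, a) (q.1, a')) := rfl
    rw [h, _root_.map_smul]; rfl


namespace S19


def outerM {H : Type*} (v : H → ℂ) : Matrix H H ℂ := Matrix.of fun i j => v i * star (v j)

lemma mul_outer {P H : Type*} [Fintype H] (B : Matrix P H ℂ) (v : H → ℂ) (p q : P) :
    (B * outerM v * Bᴴ) p q = (B.mulVec v p) * star (B.mulVec v q) := by
  have : (B.mulVec v p) * star (B.mulVec v q)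
      = ∑ k, ∑ l, B p k * v k * (star (v l) * star (B q l)) := by
    rw [Matrix.mulVec, Matrix.mulVec, dotProduct, dotProduct, star_sum, Finset.sum_mul_sum]
    refine Finset.sum_congr rfl fun k _ => Finset.sum_congr rfl fun l _ => ?_
    rw [star_mul']; ring
  rw [this]
  rw [Matrix.mul_apply]
  rw [Finset.sum_comm]
  refine Finset.sum_congr rfl fun l _ => ?_
  rw [Matrix.mul_apply, Finset.sum_mul]
  refine Finset.sum_congr rfl fun k _ => ?_
  simp [outerM, conjTranspose_apply, star_mul']
  ring

lemma outer_posSemidef {H : Type*} [Fintype H] (v : H → ℂ) : (outerM v).PosSemidef := by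
  refine posSemidef_iff_dotProduct_mulVec.mpr ⟨?_, ?_⟩
  · ext i j; simp [outerM, conjTranspose_apply, star_mul', mul_comm]
  · intro x
    have h : star x ⬝ᵥ (outerM v).mulVec x
        = (∑ i, star (x i) * v i) * star (∑ i, star (x i) * v i) := by
      rw [dotProduct, star_sum, Finset.sum_mul_sum]
      simp only [Matrix.mulVec, dotProduct, outerM, Matrix.of_apply, Finset.mul_sum]
      refine Finset.sum_congr rfl fun i _ => Finset.sum_congr rfl fun j _ => ?_
      rw [star_mul']; simp; ring
    rw [h]
    exact mul_star_self_nonneg _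

lemma outer_trace {H : Type*} [Fintype H] (v : H → ℂ)
    (hv : ∑ i, v i * star (v i) = 1) : (outerM v).trace = 1 := by
  simp [Matrix.trace, Matrix.diag, outerM]
  convert hv using 1
  rfl



lemma star_self_c (z : ℂ) : z * star z = (Complex.normSq z : ℂ) := by
  rw [Complex.star_def]; exact Complex.mul_conj z

lemma eigen_scalar {H ι : Type*} [Fintype H] [DecidableEq H] [Fintype ι]
    (A : ι → Matrix H H ℂ)
    (h : ∀ v : H → ℂ, (∑ i, v i * star (v i)) = 1 →
      ∀ i j, (∑ α, (A α).mulVec v i * star ((A α).mulVec v j)) = v i * star (v j)) :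
    ∀ α, ∃ c : ℂ, A α = c • (1 : Matrix H H ℂ) := by
  have cross : ∀ v : H → ℂ, (∑ i, v i * star (v i)) = 1 → ∀ α i k,
      (A α).mulVec v i * v k = (A α).mulVec v k * v i := by
    intro v hv α i k
    set w : ι → H → ℂ := fun β => (A β).mulVec v with hw
    have hsumC : (∑ β, ((w β i * v k - w β k * v i) * star (w β i * v k - w β k * v i))) = 0 := by
      have expand : ∀ β, (w β i * v k - w β k * v i) * star (w β i * v k - w β k * v i)
          = (w β i * star (w β i)) * (v k * star (v k))
            - (w β i * star (w β k)) * (v k * star (v i))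
            - (w β k * star (w β i)) * (v i * star (v k))
            + (w β k * star (w β k)) * (v i * star (v i)) := by
        intro β
        simp only [star_sub, star_mul']
        ring
      calc (∑ β, ((w β i * v k - w β k * v i) * star (w β i * v k - w β k * v i)))
          = (∑ β, w β i * star (w β i)) * (v k * star (v k))
            - (∑ β, w β i * star (w β k)) * (v k * star (v i))
            - (∑ β, w β k * star (w β i)) * (v i * star (v k))
            + (∑ β, w β k * star (w β k)) * (v i * star (v i)) := by
            rw [Finset.sum_congr rfl fun β _ => expand β]
            rw [Finset.sum_add_distrib, Finset.sum_sub_distrib, Finset.sum_sub_distrib]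
            simp [Finset.sum_mul]
        _ = (v i * star (v i)) * (v k * star (v k))
            - (v i * star (v k)) * (v k * star (v i))
            - (v k * star (v i)) * (v i * star (v k))
            + (v k * star (v k)) * (v i * star (v i)) := by
            rw [h v hv i i, h v hv i k, h v hv k i, h v hv k k]
        _ = 0 := by ring
    have hsumR : (∑ β, Complex.normSq (w β i * v k - w β k * v i)) = 0 := by
      have : ((∑ β, Complex.normSq (w β i * v k - w β k * v i) : ℝ) : ℂ) = 0 := by
        push_cast
        rw [← hsumC]
        exact Finset.sum_congr rfl fun β _ => (star_self_c _).symm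
      exact_mod_cast this
    have hterm := (Finset.sum_eq_zero_iff_of_nonneg
      (fun β _ => Complex.normSq_nonneg _)).mp hsumR α (Finset.mem_univ α)
    have : w α i * v k - w α k * v i = 0 := Complex.normSq_eq_zero.mp hterm

    exact sub_eq_zero.mp this
  intro α
  by_cases hne : Nonempty H
  · obtain ⟨i₀⟩ := hne
    have hnorm : ∀ j : H, (∑ i, (Pi.single j 1 : H → ℂ) i * star ((Pi.single j 1 : H → ℂ) i)) = 1 := by
      intro j
      rw [Finset.sum_eq_single j]
      · simp
      · intro b _ hb; simp [Pi.single_apply, hb]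
      · intro hj; exact absurd (Finset.mem_univ j) hj
    have col : ∀ (j i : H), (A α).mulVec (Pi.single j 1) i = A α i j := by
      intro j i
      simp [Matrix.mulVec, dotProduct, Pi.single_apply]
    have colstruct : ∀ j i, i ≠ j → A α i j = 0 := by
      intro j i hij
      have hc := cross (Pi.single j 1) (hnorm j) α i j
      rw [col, col] at hc
      simpa [Pi.single_apply, hij] using hc
    have cconst : ∀ j : H, A α j j = A α i₀ i₀ := by
      intro j
      by_cases hj : j = i₀
      · rw [hj]
      · set t : ℂ := (((Real.sqrt 2)⁻¹ : ℝ) : ℂ) with ht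
        have hR2 : (Real.sqrt 2)⁻¹ * (Real.sqrt 2)⁻¹ = (1/2 : ℝ) := by
          rw [← mul_inv, Real.mul_self_sqrt (by norm_num)]
          norm_num
        have ht2 : t * t = (1/2 : ℂ) := by
          rw [ht, ← Complex.ofReal_mul, hR2]
          norm_num
        have htne : t ≠ 0 := by
          intro h0
          rw [h0] at ht2
          norm_num at ht2
        set v : H → ℂ := fun k => if k = j ∨ k = i₀ then t else 0 with hvdef
        have hstar_t : star t = t := by rw [ht]; exact Complex.conj_ofReal _
        have hv : (∑ i, v i * star (v i)) = 1 := by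
          have hterm : ∀ i : H, v i * star (v i)
              = (if i = j then (1/2 : ℂ) else 0) + (if i = i₀ then (1/2 : ℂ) else 0) := by
            intro i
            by_cases h1 : i = j
            · have hvi : v i = t := by simp [hvdef, h1]
              rw [hvi, hstar_t, ht2, if_pos h1, if_neg (fun hh => hj (h1.symm.trans hh))]
              ring
            · by_cases h2 : i = i₀
              · have hvi : v i = t := by simp [hvdef, h2]
                rw [hvi, hstar_t, ht2, if_neg h1, if_pos h2]
                ring
              · have hvi : v i = 0 := by simp [hvdef, h1, h2]
                rw [hvi, if_neg h1, if_neg h2]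
                simp
          rw [Finset.sum_congr rfl fun i _ => hterm i, Finset.sum_add_distrib]
          simp
          norm_num
        have hcross := cross v hv α j i₀
        have hmv : ∀ k : H, (A α).mulVec v k = t * (A α k j + A α k i₀) := by
          intro k
          have : ∀ l : H, A α k l * v l
              = (if l = j then t * A α k j else 0) + (if l = i₀ then t * A α k i₀ else 0) := by
            intro l
            by_cases h1 : l = j
            · have hvl : v l = t := by simp [hvdef, h1]
              rw [hvl, if_pos h1, if_neg (fun hh => hj (h1.symm.trans hh)), h1]
              ring
            · by_cases h2 : l = i₀
              · have hvl : v l = t := by simp [hvdef, h2]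
                rw [hvl, if_neg h1, if_pos h2, h2]
                ring
              · have hvl : v l = 0 := by simp [hvdef, h1, h2]
                rw [hvl, if_neg h1, if_neg h2]
                simp
          rw [Matrix.mulVec, dotProduct, Finset.sum_congr rfl fun l _ => this l,
            Finset.sum_add_distrib]
          simp
          ring
        rw [hmv j, hmv i₀] at hcross
        have hvj : v j = t := by simp [hvdef]
        have hvi0 : v i₀ = t := by simp [hvdef]
        rw [hvj, hvi0] at hcross
        have hAji0 : A α j i₀ = 0 := colstruct i₀ j hj
        have hAi0j : A α i₀ j = 0 := colstruct j i₀ (fun hh => hj hh.symm)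
        rw [hAji0, hAi0j] at hcross
        have := mul_left_cancel₀ htne (mul_left_cancel₀ htne (by
          calc t * (t * A α j j) = t * (A α j j + 0) * t := by ring
            _ = t * (0 + A α i₀ i₀) * t := hcross
            _ = t * (t * A α i₀ i₀) := by ring))
        exact this
    refine ⟨A α i₀ i₀, ?_⟩
    ext i j
    by_cases hij : i = j
    · subst hij
      simp [Matrix.one_apply, cconst i]
    · simp [Matrix.one_apply, hij, colstruct j i hij]
  · refine ⟨0, ?_⟩
    ext i j
    exact absurd ⟨i⟩ hne

lemma sum_rot {α β γ : Type*} [Fintype α] [Fintype β] [Fintype γ] (f : α → β → γ → ℂ) :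
    (∑ a, ∑ b, ∑ c, f a b c) = ∑ c, ∑ a, ∑ b, f a b c := by
  have h1 : (∑ a, ∑ b, ∑ c, f a b c) = ∑ a, ∑ c, ∑ b, f a b c :=
    Finset.sum_congr rfl fun a _ => Finset.sum_comm
  rw [h1]
  exact Finset.sum_comm

lemma sum_rotl {α β γ : Type*} [Fintype α] [Fintype β] [Fintype γ] (f : α → β → γ → ℂ) :
    (∑ a, ∑ b, ∑ c, f a b c) = ∑ b, ∑ c, ∑ a, f a b c :=
  (sum_rot (fun b c a => f a b c)).symm

lemma sum4_swap {α α' β β' : Type*} [Fintype α] [Fintype α'] [Fintype β] [Fintype β']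
    (f : α → α' → β → β' → ℂ) :
    (∑ a, ∑ a', ∑ b, ∑ b', f a a' b b') = ∑ b, ∑ b', ∑ a, ∑ a', f a a' b b' := by
  rw [Finset.sum_congr rfl fun a _ => sum_rotl (fun a' b b' => f a a' b b')]
  exact sum_rotl (fun a b b' => ∑ a', f a a' b b')

lemma lin_entry_expand {n m : Type*} [Fintype n] [DecidableEq n] [Fintype m]
    (R : Matrix n n ℂ →ₗ[ℂ] Matrix m m ℂ) (N : Matrix n n ℂ) (i j : m) :
    R N i j = ∑ a : n, ∑ a' : n, N a a' * R (Matrix.single a a' 1) i j := by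
  conv_lhs => rw [Matrix.matrix_eq_sum_single N]
  rw [map_sum, Matrix.sum_apply]
  refine Finset.sum_congr rfl fun a _ => ?_
  rw [map_sum, Matrix.sum_apply]
  refine Finset.sum_congr rfl fun a' _ => ?_
  have h : Matrix.single a a' (N a a') = N a a' • Matrix.single a a' (1 : ℂ) := by
    rw [Matrix.smul_single, smul_eq_mul, mul_one]
  rw [h, _root_.map_smul, Matrix.smul_apply, smul_eq_mul]

lemma ptraceFst_lmapSnd {Y X H : Type*} [Fintype Y] [Fintype X] [Fintype H]
    (R : Matrix X X ℂ →ₗ[ℂ] Matrix H H ℂ) (M : Matrix (Y × X) (Y × X) ℂ) :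
    ptraceFst (lmapSnd R M) = R (ptraceFst M) := by
  funext i j
  show (∑ y : Y, R (Matrix.of fun a a' => M (y, a) (y, a')) i j) = R (ptraceFst M) i j
  have h : ptraceFst M = ∑ y : Y, Matrix.of fun a a' => M (y, a) (y, a') := by
    funext a a'
    simp [ptraceFst, Matrix.sum_apply]
  rw [h, map_sum, Matrix.sum_apply]

lemma trace_preserved {n m : Type*} [Fintype n] [DecidableEq n] [Fintype m]
    (R : Matrix n n ℂ →ₗ[ℂ] Matrix m m ℂ) (hR : IsCPTP R) (A : Matrix n n ℂ) :
    (R A).trace = A.trace := by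
  obtain ⟨NR, L, hL, h1⟩ := hR
  rw [hL, Matrix.trace_sum]
  rw [Finset.sum_congr rfl fun b _ => Matrix.trace_mul_cycle (L b) A (L b)ᴴ]
  calc ∑ b, ((L b)ᴴ * L b * A).trace
      = (∑ b, (L b)ᴴ * L b * A).trace := by rw [Matrix.trace_sum]
    _ = A.trace := by rw [← Finset.sum_mul, h1, one_mul]

lemma ptraceSnd_lmapSnd {Y X H : Type*} [Fintype Y] [Fintype X] [DecidableEq X] [Fintype H]
    (R : Matrix X X ℂ →ₗ[ℂ] Matrix H H ℂ) (hR : IsCPTP R) (M : Matrix (Y × X) (Y × X) ℂ) :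
    ptraceSnd (lmapSnd R M) = ptraceSnd M := by
  funext y y'
  show (∑ i : H, R (Matrix.of fun a a' => M (y, a) (y', a')) i i) = ∑ x : X, M (y, x) (y', x)
  have := trace_preserved R hR (Matrix.of fun a a' => M (y, a) (y', a'))
  simpa [Matrix.trace, Matrix.diag] using this

lemma lmap_comm {Y X H : Type*} [Fintype Y] [DecidableEq Y] [Fintype X] [DecidableEq X] [Fintype H]
    (E : Matrix Y Y ℂ →ₗ[ℂ] Matrix Y Y ℂ) (R : Matrix X X ℂ →ₗ[ℂ] Matrix H H ℂ)
    (M : Matrix (Y × X) (Y × X) ℂ) :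
    lmapSnd R (lmapFst E M) = lmapFst E (lmapSnd R M) := by
  funext p q
  obtain ⟨y, i⟩ := p
  obtain ⟨y', j⟩ := q
  show R (Matrix.of fun a a' => lmapFst E M (y, a) (y', a')) i j
      = E (Matrix.of fun b b' => lmapSnd R M (b, i) (b', j)) y y'
  rw [lin_entry_expand R, lin_entry_expand E]
  have hLh : ∀ a a' : X, (Matrix.of fun a a' => lmapFst E M (y, a) (y', a')) a a'
      = ∑ b, ∑ b', M (b, a) (b', a') * E (Matrix.single b b' 1) y y' := by
    intro a a'
    show E (Matrix.of fun b b' => M (b, a) (b', a')) y y' = _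
    rw [lin_entry_expand E]
    rfl
  have hRh : ∀ b b' : Y, (Matrix.of fun b b' => lmapSnd R M (b, i) (b', j)) b b'
      = ∑ a, ∑ a', M (b, a) (b', a') * R (Matrix.single a a' 1) i j := by
    intro b b'
    show R (Matrix.of fun a a' => M (b, a) (b', a')) i j = _
    rw [lin_entry_expand R]
    rfl
  calc (∑ a, ∑ a', (Matrix.of fun a a' => lmapFst E M (y, a) (y', a')) a a'
          * R (Matrix.single a a' 1) i j)
      = ∑ a, ∑ a', ∑ b, ∑ b', M (b, a) (b', a') * E (Matrix.single b b' 1) y y'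
          * R (Matrix.single a a' 1) i j := by
        refine Finset.sum_congr rfl fun a _ => Finset.sum_congr rfl fun a' _ => ?_
        rw [hLh a a', Finset.sum_mul]
        exact Finset.sum_congr rfl fun b _ => by rw [Finset.sum_mul]
    _ = ∑ b, ∑ b', ∑ a, ∑ a', M (b, a) (b', a') * E (Matrix.single b b' 1) y y'
          * R (Matrix.single a a' 1) i j := sum4_swap _
    _ = ∑ b, ∑ b', (Matrix.of fun b b' => lmapSnd R M (b, i) (b', j)) b b'
          * E (Matrix.single b b' 1) y y' := by
        refine Finset.sum_congr rfl fun b _ => Finset.sum_congr rfl fun b' _ => ?_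
        rw [hRh b b', Finset.sum_mul]
        refine Finset.sum_congr rfl fun a _ => ?_
        rw [Finset.sum_mul]
        exact Finset.sum_congr rfl fun a' _ => by ring

lemma lmapFst_kron {Y H : Type*} [Fintype Y] [Fintype H]
    (E : Matrix Y Y ℂ →ₗ[ℂ] Matrix Y Y ℂ) (σ : Matrix Y Y ℂ) (ρ : Matrix H H ℂ) :
    lmapFst E (σ ⊗ₖ ρ) = (E σ) ⊗ₖ ρ := by
  funext p q
  obtain ⟨y, i⟩ := p
  obtain ⟨y', j⟩ := q
  show E (Matrix.of fun b b' => σ b b' * ρ i j) y y' = E σ y y' * ρ i j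
  have h : (Matrix.of fun b b' => σ b b' * ρ i j) = ρ i j • σ := by
    ext b b'
    simp [mul_comm]
  rw [h, _root_.map_smul, Matrix.smul_apply, smul_eq_mul]
  ring

end S19


/-- If `W_{XY} : S(H) → S(H_Y ⊗ H_X)` is a channel whose `X`-marginal channel is
reversible via a decoding channel `R_X` and whose `Y`-marginal channel is constant
equal to `ρ₀` on pure states, then for every density operator `ρ`
`(I_Y ⊗ R_X)(W_{XY}(ρ)) = ρ₀ ⊗ ρ`, and for any channel `E_Y` on the `Y` system
`(I_Y ⊗ R_X)((E_Y ⊗ I_X)(W_{XY}(ρ))) = E_Y(ρ₀) ⊗ ρ`. -/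
theorem stmt_19 {H X Y : Type*} [Fintype H] [DecidableEq H]
    [Fintype X] [DecidableEq X] [Fintype Y] [DecidableEq Y]
    (W : Matrix H H ℂ →ₗ[ℂ] Matrix (Y × X) (Y × X) ℂ) (hW : IsCPTP W)
    (R : Matrix X X ℂ →ₗ[ℂ] Matrix H H ℂ) (hR : IsCPTP R)
    (hRdec : ∀ ρ : Matrix H H ℂ, IsDensity ρ → R (ptraceFst (W ρ)) = ρ)
    (ρ₀ : Matrix Y Y ℂ)
    (hconst : ∀ ρ : Matrix H H ℂ, IsPure ρ → ptraceSnd (W ρ) = ρ₀) :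
    ∀ ρ : Matrix H H ℂ, IsDensity ρ →
      lmapSnd R (W ρ) = ρ₀ ⊗ₖ ρ ∧
        ∀ E : Matrix Y Y ℂ →ₗ[ℂ] Matrix Y Y ℂ, IsCPTP E →
          lmapSnd R (lmapFst E (W ρ)) = (E ρ₀) ⊗ₖ ρ := by
  classical
  obtain ⟨NW, K, hK, _⟩ := hW
  have hRcptp : IsCPTP R := hR
  obtain ⟨NR, L, hL, hL1⟩ := hR
  -- Kraus form of `lmapSnd R`
  have hRapp : ∀ Mx : Matrix (Y × X) (Y × X) ℂ,
      lmapSnd R Mx = ∑ b, ((1 : Matrix Y Y ℂ) ⊗ₖ L b) * Mx * ((1 : Matrix Y Y ℂ) ⊗ₖ L b)ᴴ := by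
    intro Mx
    funext p q
    obtain ⟨y, i⟩ := p
    obtain ⟨y', j⟩ := q
    show R (Matrix.of fun x x' => Mx (y, x) (y', x')) i j = _
    rw [hL, Matrix.sum_apply, Matrix.sum_apply]
    refine Finset.sum_congr rfl fun b _ => ?_
    simp only [Matrix.mul_apply, Matrix.conjTranspose_apply, Matrix.kroneckerMap_apply,
      Matrix.one_apply, Fintype.sum_prod_type, Matrix.of_apply, ite_mul, one_mul, zero_mul,
      mul_ite, mul_one, mul_zero, apply_ite (star : ℂ → ℂ), star_one, star_zero,
      Finset.sum_ite_irrel, Finset.sum_const_zero, Finset.sum_ite_eq, Finset.sum_ite_eq', Finset.mem_univ, if_true]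
  set Mk : Fin NW → Fin NR → Matrix (Y × H) H ℂ :=
    fun a b => ((1 : Matrix Y Y ℂ) ⊗ₖ L b) * K a with hMkdef
  have hCK : ∀ ρ : Matrix H H ℂ,
      lmapSnd R (W ρ) = ∑ a, ∑ b, Mk a b * ρ * (Mk a b)ᴴ := by
    intro ρ
    rw [hRapp, hK]
    calc (∑ b, ((1 : Matrix Y Y ℂ) ⊗ₖ L b) * (∑ a, K a * ρ * (K a)ᴴ)
            * ((1 : Matrix Y Y ℂ) ⊗ₖ L b)ᴴ)
        = ∑ b, ∑ a, ((1 : Matrix Y Y ℂ) ⊗ₖ L b) * (K a * ρ * (K a)ᴴ)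
            * ((1 : Matrix Y Y ℂ) ⊗ₖ L b)ᴴ := by
          refine Finset.sum_congr rfl fun b _ => ?_
          rw [Matrix.mul_sum, Matrix.sum_mul]
      _ = ∑ a, ∑ b, ((1 : Matrix Y Y ℂ) ⊗ₖ L b) * (K a * ρ * (K a)ᴴ)
            * ((1 : Matrix Y Y ℂ) ⊗ₖ L b)ᴴ := Finset.sum_comm
      _ = ∑ a, ∑ b, Mk a b * ρ * (Mk a b)ᴴ := by
          refine Finset.sum_congr rfl fun a _ => Finset.sum_congr rfl fun b _ => ?_
          rw [hMkdef]
          simp only [Matrix.conjTranspose_mul, Matrix.mul_assoc]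
  -- the family of effective Kraus operators on H
  set Afam : (Fin NW × Fin NR × Y) → Matrix H H ℂ :=
    fun t => Matrix.of fun i k => Mk t.1 t.2.1 (t.2.2, i) k with hAfam
  have hAv : ∀ (t : Fin NW × Fin NR × Y) (v : H → ℂ) (i : H),
      (Afam t).mulVec v i = (Mk t.1 t.2.1).mulVec v (t.2.2, i) := by
    intro t v i
    simp [hAfam, Matrix.mulVec, dotProduct]
  have heig : ∀ v : H → ℂ, (∑ i, v i * star (v i)) = 1 →
      ∀ i j, (∑ t : Fin NW × Fin NR × Y,
          (Afam t).mulVec v i * star ((Afam t).mulVec v j)) = v i * star (v j) := by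
    intro v hv i j
    have hden : IsDensity (S19.outerM v) := ⟨S19.outer_posSemidef v, S19.outer_trace v hv⟩
    have hPF : ptraceFst (lmapSnd R (W (S19.outerM v))) = S19.outerM v := by
      rw [S19.ptraceFst_lmapSnd, hRdec (S19.outerM v) hden]
    calc (∑ t : Fin NW × Fin NR × Y, (Afam t).mulVec v i * star ((Afam t).mulVec v j))
        = ∑ a, ∑ b, ∑ y, (Mk a b).mulVec v (y, i) * star ((Mk a b).mulVec v (y, j)) := by
          rw [Fintype.sum_prod_type]
          refine Finset.sum_congr rfl fun a _ => ?_
          rw [Fintype.sum_prod_type]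
          refine Finset.sum_congr rfl fun b _ => Finset.sum_congr rfl fun y _ => ?_
          rw [hAv, hAv]
      _ = ∑ y, ∑ a, ∑ b, (Mk a b * S19.outerM v * (Mk a b)ᴴ) (y, i) (y, j) := by
          rw [S19.sum_rot]
          refine Finset.sum_congr rfl fun y _ => Finset.sum_congr rfl fun a _ =>
            Finset.sum_congr rfl fun b _ => ?_
          rw [S19.mul_outer]
      _ = ∑ y, (lmapSnd R (W (S19.outerM v))) (y, i) (y, j) := by
          refine Finset.sum_congr rfl fun y _ => ?_
          rw [hCK (S19.outerM v), Matrix.sum_apply]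
          exact Finset.sum_congr rfl fun a _ => by rw [Matrix.sum_apply]
      _ = ptraceFst (lmapSnd R (W (S19.outerM v))) i j := rfl
      _ = v i * star (v j) := by rw [hPF]; rfl
  have hsc := S19.eigen_scalar Afam heig
  choose c hc using hsc
  set σ : Matrix Y Y ℂ :=
    Matrix.of fun y y' => ∑ a, ∑ b, c (a, b, y) * star (c (a, b, y')) with hσdef
  have hMkent : ∀ (a : Fin NW) (b : Fin NR) (y : Y) (i k : H),
      Mk a b (y, i) k = c (a, b, y) * (1 : Matrix H H ℂ) i k := by
    intro a b y i k
    have h := congrFun (congrFun (hc (a, b, y)) i) k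
    simpa [hAfam, Matrix.smul_apply, smul_eq_mul] using h
  have hC : ∀ ρ : Matrix H H ℂ, lmapSnd R (W ρ) = σ ⊗ₖ ρ := by
    intro ρ
    rw [hCK]
    funext p q
    obtain ⟨y, i⟩ := p
    obtain ⟨y', j⟩ := q
    rw [Matrix.sum_apply]
    show (∑ a, (∑ b, Mk a b * ρ * (Mk a b)ᴴ) (y, i) (y', j)) = σ y y' * ρ i j
    rw [hσdef]
    show _ = (∑ a, ∑ b, c (a, b, y) * star (c (a, b, y'))) * ρ i j
    rw [Finset.sum_mul]
    refine Finset.sum_congr rfl fun a _ => ?_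
    rw [Matrix.sum_apply, Finset.sum_mul]
    refine Finset.sum_congr rfl fun b _ => ?_
    simp only [Matrix.mul_apply, Matrix.conjTranspose_apply, hMkent, Matrix.one_apply,
      ite_mul, mul_ite, one_mul, mul_one, zero_mul, mul_zero, star_one, star_zero, apply_ite (star : ℂ → ℂ),
      star_mul', Finset.sum_ite_eq, Finset.sum_ite_eq', Finset.mem_univ, if_true]
    ring
  -- now use a pure reference state to identify σ with ρ₀
  intro ρ hρ
  have hHne : Nonempty H := by
    by_contra hne
    have hIE : IsEmpty H := not_nonempty_iff.mp hne
    have h0 : ρ.trace = 0 := by simp [Matrix.trace]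
    rw [hρ.2] at h0
    exact one_ne_zero h0
  obtain ⟨i₀⟩ := hHne
  set v0 : H → ℂ := Pi.single i₀ 1 with hv0def
  have hv0 : (∑ i, v0 i * star (v0 i)) = 1 := by
    rw [Finset.sum_eq_single i₀]
    · simp [hv0def]
    · intro b _ hb
      simp [hv0def, Pi.single_apply, hb]
    · intro hj
      exact absurd (Finset.mem_univ i₀) hj
  have hpure : IsPure (S19.outerM v0) := by
    refine ⟨⟨S19.outer_posSemidef v0, S19.outer_trace v0 hv0⟩, ?_⟩
    funext i j
    rw [Matrix.mul_apply]
    calc (∑ k, S19.outerM v0 i k * S19.outerM v0 k j)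
        = (v0 i * star (v0 j)) * ∑ k, v0 k * star (v0 k) := by
          rw [Finset.mul_sum]
          refine Finset.sum_congr rfl fun k _ => ?_
          show (v0 i * star (v0 k)) * (v0 k * star (v0 j)) = _
          ring
      _ = S19.outerM v0 i j := by rw [hv0, mul_one]; rfl
  have hσρ₀ : σ = ρ₀ := by
    have h1 := S19.ptraceSnd_lmapSnd R hRcptp (W (S19.outerM v0))
    have h2 : ptraceSnd (lmapSnd R (W (S19.outerM v0))) = σ := by
      rw [hC (S19.outerM v0)]
      funext y y'
      show (∑ i, (σ ⊗ₖ S19.outerM v0) (y, i) (y', i)) = σ y y'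
      calc (∑ i, (σ ⊗ₖ S19.outerM v0) (y, i) (y', i))
          = σ y y' * ∑ i, v0 i * star (v0 i) := by
            rw [Finset.mul_sum]
            refine Finset.sum_congr rfl fun i _ => ?_
            show σ y y' * (v0 i * star (v0 i)) = _
            ring
        _ = σ y y' := by rw [hv0, mul_one]
    rw [← h2, h1, hconst (S19.outerM v0) hpure]
  refine ⟨by rw [hC ρ, hσρ₀], fun E _ => ?_⟩
  rw [S19.lmap_comm E R (W ρ), hC ρ, hσρ₀, S19.lmapFst_kron]
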